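/- arXiv:1604.00046 — 6 statements merged into one kernel-verified Lean document; each statement's English description precedes it below -/
import Mathlib

section
/- Let f(x) = Σ_{i=0}^{r} μ_i x^i be a polynomial with real coefficients μ_i, let M1, M2, M3, M4 be real numbers and M = M1σ1 + M2σ2 + M3σ3 + M4σ4 ∈ M₂(ℂ). Then trace( f(M) ) = 2·[ Σ_{a=0}^{⌊r/2⌋} μ_{2a} ( Σ_{s=0}^{a} binom(2a, 2s) (M1² + M2² + M3²)^{a−s} M4^{2s} ) + Σ_{a=0}^{⌈r/2⌉−1} μ_{2a+1} ( Σ_{s=0}^{a} binom(2a+1, 2s+1) (M1² + M2² + M3²)^{a−s} M4^{2s+1} ) ], where the left-hand side is the trace of the evaluation of f at M in the ℝ-algebra M₂(ℂ). -/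
open Matrix Polynomial Finset

/-- The Pauli matrix σ1. -/
noncomputable def pauli1 : Matrix (Fin 2) (Fin 2) ℂ := !![0, 1; 1, 0]
/-- The Pauli matrix σ2. -/
noncomputable def pauli2 : Matrix (Fin 2) (Fin 2) ℂ := !![0, -Complex.I; Complex.I, 0]
/-- The Pauli matrix σ3. -/
noncomputable def pauli3 : Matrix (Fin 2) (Fin 2) ℂ := !![1, 0; 0, -1]
/-- The identity matrix σ4. -/
noncomputable def pauli4 : Matrix (Fin 2) (Fin 2) ℂ := !![1, 0; 0, 1]

noncomputable def Vm (M1 M2 M3 : ℝ) : Matrix (Fin 2) (Fin 2) ℂ :=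
  M1 • pauli1 + M2 • pauli2 + M3 • pauli3

lemma Vm_sq (M1 M2 M3 : ℝ) :
    Vm M1 M2 M3 ^ 2 = ((M1^2 + M2^2 + M3^2 : ℝ) : ℂ) • 1 := by
  ext i j
  fin_cases i <;> fin_cases j <;>
    simp [Vm, pauli1, pauli2, pauli3, pow_two, Matrix.mul_apply, Fin.sum_univ_two,
      Matrix.one_apply, Complex.ext_iff]
  all_goals try constructor
  all_goals first | trivial | ring

lemma Vm_trace (M1 M2 M3 : ℝ) : (Vm M1 M2 M3).trace = 0 := by
  simp [Vm, Matrix.trace, pauli1, pauli2, pauli3, Fin.sum_univ_two, Matrix.diag]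

lemma Vm_pow_even (M1 M2 M3 : ℝ) (m : ℕ) :
    Vm M1 M2 M3 ^ (2 * m) = (((M1^2 + M2^2 + M3^2 : ℝ) : ℂ) ^ m) • 1 := by
  rw [pow_mul, Vm_sq, _root_.smul_pow, one_pow]

lemma Vm_pow_odd (M1 M2 M3 : ℝ) (m : ℕ) :
    Vm M1 M2 M3 ^ (2 * m + 1) = (((M1^2 + M2^2 + M3^2 : ℝ) : ℂ) ^ m) • Vm M1 M2 M3 := by
  rw [pow_succ, Vm_pow_even, smul_mul_assoc, one_mul]

lemma trace_Vm_pow_even (M1 M2 M3 : ℝ) (m : ℕ) :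
    (Vm M1 M2 M3 ^ (2 * m)).trace = 2 * ((M1^2 + M2^2 + M3^2 : ℝ) : ℂ) ^ m := by
  rw [Vm_pow_even, Matrix.trace_smul, Matrix.trace_one]
  simp [mul_comm]

lemma trace_Vm_pow_odd (M1 M2 M3 : ℝ) (m : ℕ) :
    (Vm M1 M2 M3 ^ (2 * m + 1)).trace = 0 := by
  rw [Vm_pow_odd, Matrix.trace_smul, Vm_trace, smul_zero]

lemma sum_range_even_odd {M : Type*} [AddCommMonoid M] (g : ℕ → M) (n : ℕ) :
    ∑ i ∈ range n, g i
      = (∑ a ∈ range ((n + 1) / 2), g (2 * a)) + ∑ a ∈ range (n / 2), g (2 * a + 1) := by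
  induction n with
  | zero => simp
  | succ n ih =>
    rw [Finset.sum_range_succ, ih]
    rcases Nat.even_or_odd n with ⟨m, rfl⟩ | ⟨m, rfl⟩
    · have h4 : m + m = 2 * m := by omega
      have h1 : (2 * m + 1) / 2 = m := by omega
      have h2 : 2 * m / 2 = m := by omega
      have h3 : (2 * m + 1 + 1) / 2 = m + 1 := by omega
      simp only [h4, h1, h2, h3, Finset.sum_range_succ]
      abel
    · have h1 : (2 * m + 1 + 1) / 2 = m + 1 := by omega
      have h2 : (2 * m + 1) / 2 = m := by omega
      have h3 : (2 * m + 1 + 1 + 1) / 2 = m + 1 := by omega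
      simp only [h1, h2, h3, Finset.sum_range_succ]
      abel

lemma trace_add_smul_one_pow (V : Matrix (Fin 2) (Fin 2) ℂ) (d : ℂ) (n : ℕ) :
    ((d • 1 + V) ^ n).trace
      = ∑ k ∈ range (n + 1), (n.choose k : ℂ) * d ^ k * (V ^ (n - k)).trace := by
  have hc : Commute (d • (1 : Matrix (Fin 2) (Fin 2) ℂ)) V :=
    (Commute.one_left V).smul_left d
  rw [hc.add_pow, Matrix.trace_sum]
  refine Finset.sum_congr rfl fun k hk => ?_
  rw [_root_.smul_pow, one_pow, Matrix.smul_mul, one_mul]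
  have hcast : ((n.choose k : ℕ) : Matrix (Fin 2) (Fin 2) ℂ)
      = ((n.choose k : ℂ)) • 1 := by
    rw [show ((n.choose k : ℂ)) • (1 : Matrix (Fin 2) (Fin 2) ℂ)
        = algebraMap ℂ _ ((n.choose k : ℂ)) from (Algebra.algebraMap_eq_smul_one _).symm,
      map_natCast]
  rw [hcast, mul_smul_comm, mul_one, Matrix.trace_smul, Matrix.trace_smul]
  simp [smul_eq_mul]; ring

lemma trace_M_pow_even (M1 M2 M3 M4 : ℝ) (a : ℕ) :
    ((((M4 : ℂ)) • 1 + Vm M1 M2 M3) ^ (2 * a)).trace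
      = 2 * ∑ s ∈ range (a + 1), ((2 * a).choose (2 * s) : ℂ)
          * ((M1^2 + M2^2 + M3^2 : ℝ) : ℂ) ^ (a - s) * (M4 : ℂ) ^ (2 * s) := by
  rw [trace_add_smul_one_pow, sum_range_even_odd]
  have h1 : (2 * a + 1 + 1) / 2 = a + 1 := by omega
  have h2 : (2 * a + 1) / 2 = a := by omega
  rw [h1, h2]
  have hodd : ∀ s ∈ range a,
      ((2 * a).choose (2 * s + 1) : ℂ) * (M4 : ℂ) ^ (2 * s + 1)
        * (Vm M1 M2 M3 ^ (2 * a - (2 * s + 1))).trace = 0 := by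
    intro s hs
    have hs' : s < a := mem_range.mp hs
    have : 2 * a - (2 * s + 1) = 2 * (a - s - 1) + 1 := by omega
    rw [this, trace_Vm_pow_odd, mul_zero]
  rw [Finset.sum_congr rfl hodd, Finset.sum_const, smul_zero, add_zero, Finset.mul_sum]
  refine Finset.sum_congr rfl fun s hs => ?_
  have hs' : s ≤ a := by have := mem_range.mp hs; omega
  have h3 : 2 * a - 2 * s = 2 * (a - s) := by omega
  rw [h3, trace_Vm_pow_even]
  ring

lemma trace_M_pow_odd (M1 M2 M3 M4 : ℝ) (a : ℕ) :
    ((((M4 : ℂ)) • 1 + Vm M1 M2 M3) ^ (2 * a + 1)).trace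
      = 2 * ∑ s ∈ range (a + 1), ((2 * a + 1).choose (2 * s + 1) : ℂ)
          * ((M1^2 + M2^2 + M3^2 : ℝ) : ℂ) ^ (a - s) * (M4 : ℂ) ^ (2 * s + 1) := by
  rw [trace_add_smul_one_pow, sum_range_even_odd]
  have h1 : (2 * a + 1 + 1 + 1) / 2 = a + 1 := by omega
  have h2 : (2 * a + 1 + 1) / 2 = a + 1 := by omega
  rw [h1, h2]
  have heven : ∀ s ∈ range (a + 1),
      ((2 * a + 1).choose (2 * s) : ℂ) * (M4 : ℂ) ^ (2 * s)
        * (Vm M1 M2 M3 ^ (2 * a + 1 - 2 * s)).trace = 0 := by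
    intro s hs
    have hs' : s ≤ a := by have := mem_range.mp hs; omega
    have : 2 * a + 1 - 2 * s = 2 * (a - s) + 1 := by omega
    rw [this, trace_Vm_pow_odd, mul_zero]
  rw [Finset.sum_congr rfl heven, Finset.sum_const, smul_zero, zero_add, Finset.mul_sum]
  refine Finset.sum_congr rfl fun s hs => ?_
  have hs' : s ≤ a := by have := mem_range.mp hs; omega
  have h3 : 2 * a + 1 - (2 * s + 1) = 2 * (a - s) := by omega
  rw [h3, trace_Vm_pow_even]
  ring

/-- explicit form of the spectral action `tr f(M)` for
`f = Σ_{i=0}^{r} μᵢ xⁱ` and `M = M1σ1 + M2σ2 + M3σ3 + M4σ4`. -/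
theorem trace_spectral_action_explicit
    (r : ℕ) (μ : ℕ → ℝ) (M1 M2 M3 M4 : ℝ) :
    (Polynomial.aeval (M1 • pauli1 + M2 • pauli2 + M3 • pauli3 + M4 • pauli4)
        (∑ i ∈ range (r + 1), Polynomial.C (μ i) * Polynomial.X ^ i)).trace
      = (↑(2 * (∑ a ∈ range (r / 2 + 1), μ (2 * a) *
              ∑ s ∈ range (a + 1), (Nat.choose (2 * a) (2 * s) : ℝ)
                * (M1 ^ 2 + M2 ^ 2 + M3 ^ 2) ^ (a - s) * M4 ^ (2 * s)
            + ∑ a ∈ range ((r + 1) / 2), μ (2 * a + 1) *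
              ∑ s ∈ range (a + 1), (Nat.choose (2 * a + 1) (2 * s + 1) : ℝ)
                * (M1 ^ 2 + M2 ^ 2 + M3 ^ 2) ^ (a - s) * M4 ^ (2 * s + 1))) : ℂ) := by
  have hM : M1 • pauli1 + M2 • pauli2 + M3 • pauli3 + M4 • pauli4
      = ((M4 : ℂ)) • 1 + Vm M1 M2 M3 := by
    have h4 : pauli4 = (1 : Matrix (Fin 2) (Fin 2) ℂ) := by
      ext i j; fin_cases i <;> fin_cases j <;> simp [pauli4, Matrix.one_apply]
    rw [h4, Vm]
    ext i j
    simp [Matrix.smul_apply, Complex.real_smul]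
    ring
  rw [hM, map_sum, Matrix.trace_sum]
  have hterm : ∀ i, (Polynomial.aeval (((M4 : ℂ)) • 1 + Vm M1 M2 M3)
      (Polynomial.C (μ i) * Polynomial.X ^ i)).trace
      = (μ i : ℂ) * ((((M4 : ℂ)) • 1 + Vm M1 M2 M3) ^ i).trace := by
    intro i
    rw [_root_.map_mul, Polynomial.aeval_C, Polynomial.aeval_X_pow, ← Algebra.smul_def,
      Matrix.trace_smul]
    simp [smul_eq_mul, Complex.real_smul]
  simp only [hterm]
  rw [sum_range_even_odd (fun i => (μ i : ℂ) * ((((M4 : ℂ)) • 1 + Vm M1 M2 M3) ^ i).trace)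
      (r + 1)]
  have h1 : (r + 1 + 1) / 2 = r / 2 + 1 := by omega
  rw [h1]
  simp only [trace_M_pow_even, trace_M_pow_odd]
  push_cast
  rw [mul_add, Finset.mul_sum, Finset.mul_sum]
  congr 1 <;> exact Finset.sum_congr rfl fun a _ => by ring
end

section
/- Let S be a polynomial in four real variables (an element of ℝ[X1,X2,X3,X4]) such that the induced function on Hermitian 2×2 matrices is invariant under unitary conjugation; that is, for every u in the unitary group U(2) and all real M1, M2, M3, M4, writing u(M1σ1+M2σ2+M3σ3+M4σ4)u* = c1σ1 + c2σ2 + c3σ3 + c4σ4 with c1, c2, c3, c4 real, one has S(c1,c2,c3,c4) = S(M1,M2,M3,M4). Then there exist r ∈ ℕ and one-variable real polynomials g_0, …, g_r such that S(M1,M2,M3,M4) = Σ_{k=0}^{r} (M1² + M2² + M3²)^k · g_k(M4) for all real M1, M2, M3, M4. -/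
open Matrix Finset

lemma unit1 (p q : ℝ) (h : p^2+q^2=1) :
    (!![(p:ℂ)+q*Complex.I, 0; 0, (p:ℂ)-q*Complex.I]) ∈ Matrix.unitaryGroup (Fin 2) ℂ := by
  have h' : (p:ℂ)^2+(q:ℂ)^2 = 1 := by exact_mod_cast congrArg (Complex.ofReal) h
  rw [Matrix.mem_unitaryGroup_iff]
  ext i j
  fin_cases i <;> fin_cases j <;>
    simp [Matrix.mul_apply, Fin.sum_univ_two, Matrix.star_apply, Matrix.one_apply] <;>
    linear_combination h' - (q:ℂ)^2*Complex.I_sq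

lemma conj1 (p q a b c d s : ℝ) (h : p^2+q^2=1) (ha : a = s*(p^2-q^2)) (hb : b = s*(2*p*q)) :
    (!![(p:ℂ)+q*Complex.I, 0; 0, (p:ℂ)-q*Complex.I]) *
      (a • pauli1 + b • pauli2 + c • pauli3 + d • pauli4) *
      star (!![(p:ℂ)+q*Complex.I, 0; 0, (p:ℂ)-q*Complex.I])
    = s • pauli1 + (0:ℝ) • pauli2 + c • pauli3 + d • pauli4 := by
  subst ha hb
  have h' : (p:ℂ)^2+(q:ℂ)^2 = 1 := by exact_mod_cast congrArg (Complex.ofReal) h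
  ext i j
  fin_cases i <;> fin_cases j
  · simp [pauli1, pauli2, pauli3, pauli4, Matrix.mul_apply, Fin.sum_univ_two, Matrix.star_apply]
    linear_combination ((d:ℂ)+c)*h' - ((d:ℂ)+c)*(q:ℂ)^2*Complex.I_sq
  · simp [pauli1, pauli2, pauli3, pauli4, Matrix.mul_apply, Fin.sum_univ_two, Matrix.star_apply]
    linear_combination (s:ℂ)*((p:ℂ)^2+(q:ℂ)^2+1)*h' + (s:ℂ)*((q:ℂ)^2*((p:ℂ)^2-(q:ℂ)^2) - 2*(p:ℂ)*(q:ℂ)^3*Complex.I - 4*(p:ℂ)^2*(q:ℂ)^2)*Complex.I_sq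
  · simp [pauli1, pauli2, pauli3, pauli4, Matrix.mul_apply, Fin.sum_univ_two, Matrix.star_apply]
    linear_combination (s:ℂ)*((p:ℂ)^2+(q:ℂ)^2+1)*h' + (s:ℂ)*((q:ℂ)^2*((p:ℂ)^2-(q:ℂ)^2) + 2*(p:ℂ)*(q:ℂ)^3*Complex.I - 4*(p:ℂ)^2*(q:ℂ)^2)*Complex.I_sq
  · simp [pauli1, pauli2, pauli3, pauli4, Matrix.mul_apply, Fin.sum_univ_two, Matrix.star_apply]
    linear_combination ((d:ℂ)-c)*h' - ((d:ℂ)-c)*(q:ℂ)^2*Complex.I_sq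

lemma unit2 (p q : ℝ) (h : p^2+q^2=1) :
    (!![(p:ℂ), (q:ℂ); -(q:ℂ), (p:ℂ)]) ∈ Matrix.unitaryGroup (Fin 2) ℂ := by
  have h' : (p:ℂ)^2+(q:ℂ)^2 = 1 := by exact_mod_cast congrArg (Complex.ofReal) h
  rw [Matrix.mem_unitaryGroup_iff]
  ext i j
  fin_cases i <;> fin_cases j <;>
    simp [Matrix.mul_apply, Fin.sum_univ_two, Matrix.star_apply, Matrix.one_apply] <;>
    first | ring1 | linear_combination h' | linear_combination -h'

lemma conj2 (p q c d s r : ℝ) (h : p^2+q^2=1) (hs : s = r*(p^2-q^2)) (hc : c = -(r*(2*p*q))) :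
    (!![(p:ℂ), (q:ℂ); -(q:ℂ), (p:ℂ)]) *
      (s • pauli1 + (0:ℝ) • pauli2 + c • pauli3 + d • pauli4) *
      star (!![(p:ℂ), (q:ℂ); -(q:ℂ), (p:ℂ)])
    = r • pauli1 + (0:ℝ) • pauli2 + (0:ℝ) • pauli3 + d • pauli4 := by
  subst hs hc
  have h' : (p:ℂ)^2+(q:ℂ)^2 = 1 := by exact_mod_cast congrArg (Complex.ofReal) h
  ext i j
  fin_cases i <;> fin_cases j
  · simp [pauli1, pauli2, pauli3, pauli4, Matrix.mul_apply, Fin.sum_univ_two, Matrix.star_apply]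
    linear_combination (d:ℂ)*h'
  · simp [pauli1, pauli2, pauli3, pauli4, Matrix.mul_apply, Fin.sum_univ_two, Matrix.star_apply]
    linear_combination (r:ℂ)*((p:ℂ)^2+(q:ℂ)^2+1)*h'
  · simp [pauli1, pauli2, pauli3, pauli4, Matrix.mul_apply, Fin.sum_univ_two, Matrix.star_apply]
    linear_combination (r:ℂ)*((p:ℂ)^2+(q:ℂ)^2+1)*h'
  · simp [pauli1, pauli2, pauli3, pauli4, Matrix.mul_apply, Fin.sum_univ_two, Matrix.star_apply]
    linear_combination (d:ℂ)*h'

lemma unit3 : pauli3 ∈ Matrix.unitaryGroup (Fin 2) ℂ := by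
  rw [Matrix.mem_unitaryGroup_iff]
  ext i j
  fin_cases i <;> fin_cases j <;>
    simp [pauli3, Matrix.mul_apply, Fin.sum_univ_two, Matrix.star_apply, Matrix.one_apply]

lemma conj3 (x y : ℝ) :
    pauli3 * (x • pauli1 + (0:ℝ) • pauli2 + (0:ℝ) • pauli3 + y • pauli4) * star pauli3
    = (-x) • pauli1 + (0:ℝ) • pauli2 + (0:ℝ) • pauli3 + y • pauli4 := by
  ext i j
  fin_cases i <;> fin_cases j <;>
  · simp [pauli1, pauli2, pauli3, pauli4, Matrix.mul_apply, Fin.sum_univ_two, Matrix.star_apply]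
    try ring

lemma half_angle (x y : ℝ) (h : x^2 + y^2 = 1) :
    ∃ p q : ℝ, p^2+q^2 = 1 ∧ p^2 - q^2 = x ∧ 2*p*q = y := by
  by_cases hx : x = -1
  · refine ⟨0, 1, by norm_num, by rw [hx]; norm_num, ?_⟩
    have hy : y^2 = 0 := by nlinarith
    have : y = 0 := by
      exact pow_eq_zero_iff (n := 2) (by norm_num) |>.mp hy
    simp [this]
  · have hge : -1 ≤ x := by nlinarith [sq_nonneg y, sq_nonneg (x+1)]
    have h1 : 0 < 1 + x := by
      rcases lt_or_eq_of_le hge with h' | h'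
      · linarith
      · exact absurd h'.symm hx
    set p := Real.sqrt ((1+x)/2) with hp
    have hp2 : p^2 = (1+x)/2 := Real.sq_sqrt (by linarith)
    have hppos : 0 < p := Real.sqrt_pos.mpr (by linarith)
    refine ⟨p, y/(2*p), ?_, ?_, ?_⟩
    · have hq2 : (y/(2*p))^2 = y^2/(2*(1+x)) := by
        rw [div_pow, mul_pow, hp2]; ring_nf
      have hy2 : y^2 = (1-x)*(1+x) := by nlinarith
      rw [hq2, hy2, hp2]
      field_simp
      ring
    · have hq2 : (y/(2*p))^2 = y^2/(2*(1+x)) := by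
        rw [div_pow, mul_pow, hp2]; ring_nf
      have hy2 : y^2 = (1-x)*(1+x) := by nlinarith
      rw [hq2, hy2, hp2]
      field_simp
      ring
    · field_simp

lemma evalPP (S : MvPolynomial (Fin 4) ℝ) (x y : ℝ) :
    Polynomial.eval y (Polynomial.eval (Polynomial.C x)
      (MvPolynomial.aeval ![(Polynomial.X : Polynomial (Polynomial ℝ)), 0, 0,
        Polynomial.C Polynomial.X] S)) = MvPolynomial.eval ![x,0,0,y] S := by
  induction S using MvPolynomial.induction_on with
  | C a => simp
  | add p q hp hq => simp [hp, hq]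
  | mul_X p n hp => fin_cases n <;> simp [hp]

lemma zeroPP (p : Polynomial (Polynomial ℝ))
    (h : ∀ x y : ℝ, Polynomial.eval y (Polynomial.eval (Polynomial.C x) p) = 0) : p = 0 := by
  have key : ∀ y : ℝ, p.map (Polynomial.evalRingHom y) = 0 := by
    intro y
    apply Polynomial.funext
    intro x
    rw [Polynomial.eval_map, Polynomial.eval_zero]
    have : (Polynomial.evalRingHom y) ((Polynomial.C (R := ℝ) x)) = x := by simp
    calc Polynomial.eval₂ (Polynomial.evalRingHom y) x p
        = Polynomial.eval₂ (Polynomial.evalRingHom y)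
            ((Polynomial.evalRingHom y) (Polynomial.C x)) p := by rw [this]
      _ = (Polynomial.evalRingHom y) (Polynomial.eval (Polynomial.C x) p) :=
            Polynomial.eval₂_at_apply _ _
      _ = 0 := by simp [h x y]
  ext n
  have hcy : ∀ y : ℝ, (p.coeff n).eval y = 0 := by
    intro y
    have := congrArg (fun r => Polynomial.coeff r n) (key y)
    simpa [Polynomial.coeff_map] using this
  have : p.coeff n = 0 := Polynomial.funext (by simpa using hcy)
  simp [this]

set_option maxRecDepth 4000 in
lemma coeff_comp_neg {A : Type*} [CommRing A] (p : Polynomial A) (n : ℕ) :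
    (p.comp (-Polynomial.X)).coeff n = (-1)^n * p.coeff n := by
  induction p using Polynomial.induction_on' with
  | add p q hp hq => simp [Polynomial.add_comp, hp, hq, mul_add]
  | monomial k a =>
    have hneg : (-Polynomial.X : Polynomial A) = Polynomial.C (-1) * Polynomial.X := by
      simp
    rw [← Polynomial.C_mul_X_pow_eq_monomial, Polynomial.mul_comp, Polynomial.C_comp,
      Polynomial.pow_comp, Polynomial.X_comp, hneg, mul_pow, ← Polynomial.C_pow]
    rw [show Polynomial.C a * (Polynomial.C ((-1:A)^k) * Polynomial.X ^ k)
        = Polynomial.C (((-1:A)^k) * a) * Polynomial.X ^ k by rw [Polynomial.C_mul]; ring]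
    simp only [Polynomial.coeff_C_mul, Polynomial.coeff_X_pow]
    split_ifs with hnk
    · subst hnk; ring
    · ring

lemma sum_even (t : ℕ → ℝ) (N : ℕ) (hodd : ∀ m, t (2*m+1) = 0) :
    ∑ n ∈ range (2*N), t n = ∑ k ∈ range N, t (2*k) := by
  induction N with
  | zero => simp
  | succ n ih =>
    have h2 : 2*(n+1) = (2*n+1)+1 := by ring
    rw [h2, Finset.sum_range_succ, hodd, Finset.sum_range_succ, ih,
      Finset.sum_range_succ]
    ring
/-- a polynomial `S ∈ ℝ[M1,M2,M3,M4]` invariant under unitary conjugation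
(in the Pauli coordinates of Hermitian 2×2 matrices) is of the form
`Σ_{k=0}^{r} (M1² + M2² + M3²)^k g_k(M4)` for one-variable real polynomials `g_k`. -/
theorem invariant_polynomial_normal_form
    (S : MvPolynomial (Fin 4) ℝ)
    (hinv : ∀ u ∈ Matrix.unitaryGroup (Fin 2) ℂ, ∀ M1 M2 M3 M4 c1 c2 c3 c4 : ℝ,
      u * (M1 • pauli1 + M2 • pauli2 + M3 • pauli3 + M4 • pauli4) * star u
          = c1 • pauli1 + c2 • pauli2 + c3 • pauli3 + c4 • pauli4 →
      MvPolynomial.eval ![c1, c2, c3, c4] S = MvPolynomial.eval ![M1, M2, M3, M4] S) :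
    ∃ (r : ℕ) (g : ℕ → Polynomial ℝ), ∀ M1 M2 M3 M4 : ℝ,
      MvPolynomial.eval ![M1, M2, M3, M4] S
        = ∑ k ∈ range (r + 1), (M1 ^ 2 + M2 ^ 2 + M3 ^ 2) ^ k * (g k).eval M4 := by
  -- reduction to the axis (a,b,c,d) ↦ (√(a²+b²+c²),0,0,d)
  have hA : ∀ a b c d : ℝ, MvPolynomial.eval ![a,b,c,d] S
      = MvPolynomial.eval ![Real.sqrt (a^2+b^2+c^2),0,0,d] S := by
    intro a b c d
    set s2 := Real.sqrt (a^2+b^2) with hs2def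
    set ρ := Real.sqrt (a^2+b^2+c^2) with hρdef
    have hab : (0:ℝ) ≤ a^2+b^2 := by positivity
    have habc : (0:ℝ) ≤ a^2+b^2+c^2 := by positivity
    have hs2sq : s2^2 = a^2+b^2 := Real.sq_sqrt hab
    have hρsq : ρ^2 = a^2+b^2+c^2 := Real.sq_sqrt habc
    have h1 : MvPolynomial.eval ![s2,0,c,d] S = MvPolynomial.eval ![a,b,c,d] S := by
      obtain ⟨p,q,hpq,hx,hy⟩ : ∃ p q : ℝ, p^2+q^2=1 ∧ a = s2*(p^2-q^2) ∧ b = s2*(2*p*q) := by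
        by_cases h0 : a^2+b^2 = 0
        · have ha0 : a = 0 := by nlinarith
          have hb0 : b = 0 := by nlinarith
          have hs0 : s2 = 0 := by rw [hs2def, ha0, hb0]; simp
          exact ⟨1, 0, by norm_num, by rw [ha0, hs0]; ring, by rw [hb0, hs0]; ring⟩
        · have hpos : 0 < a^2+b^2 := lt_of_le_of_ne hab (Ne.symm h0)
          have hs2pos : 0 < s2 := Real.sqrt_pos.mpr hpos
          obtain ⟨p,q,h1',h2',h3'⟩ := half_angle (a/s2) (b/s2)
            (by field_simp; linarith [hs2sq])
          refine ⟨p, q, h1', ?_, ?_⟩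
          · rw [h2']; field_simp
          · rw [h3']; field_simp
      exact hinv _ (unit1 p q hpq) a b c d s2 0 c d (conj1 p q a b c d s2 hpq hx hy)
    have h2 : MvPolynomial.eval ![ρ,0,0,d] S = MvPolynomial.eval ![s2,0,c,d] S := by
      obtain ⟨p,q,hpq,hx,hy⟩ : ∃ p q : ℝ, p^2+q^2=1 ∧ s2 = ρ*(p^2-q^2) ∧ c = -(ρ*(2*p*q)) := by
        by_cases h0 : a^2+b^2+c^2 = 0
        · have ha0 : a = 0 := by nlinarith
          have hb0 : b = 0 := by nlinarith
          have hc0 : c = 0 := by nlinarith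
          have hs0 : s2 = 0 := by rw [hs2def, ha0, hb0]; simp
          have hρ0 : ρ = 0 := by rw [hρdef, ha0, hb0, hc0]; simp
          exact ⟨1, 0, by norm_num, by rw [hs0, hρ0]; ring, by rw [hc0, hρ0]; ring⟩
        · have hpos : 0 < a^2+b^2+c^2 := lt_of_le_of_ne habc (Ne.symm h0)
          have hρpos : 0 < ρ := Real.sqrt_pos.mpr hpos
          obtain ⟨p,q,h1',h2',h3'⟩ := half_angle (s2/ρ) (-c/ρ)
            (by field_simp; nlinarith [hs2sq, hρsq])
          refine ⟨p, q, h1', ?_, ?_⟩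
          · rw [h2']; field_simp
          · have : 2*p*q = -c/ρ := h3'
            rw [this]; field_simp
      exact hinv _ (unit2 p q hpq) s2 0 c d ρ 0 0 d (conj2 p q c d s2 ρ hpq hx hy)
    exact (h2.trans h1).symm
  -- evenness in the first variable
  have hB : ∀ x y : ℝ, MvPolynomial.eval ![-x,0,0,y] S = MvPolynomial.eval ![x,0,0,y] S :=
    fun x y => hinv _ unit3 x 0 0 y (-x) 0 0 y (conj3 x y)
  set p : Polynomial (Polynomial ℝ) :=
    MvPolynomial.aeval ![(Polynomial.X : Polynomial (Polynomial ℝ)), 0, 0,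
      Polynomial.C Polynomial.X] S with hpdef
  have hq : p - p.comp (-Polynomial.X) = 0 := by
    apply zeroPP
    intro x y
    have hcomp : Polynomial.eval (Polynomial.C x) (p.comp (-Polynomial.X))
        = Polynomial.eval (Polynomial.C (-x)) p := by
      rw [Polynomial.eval_comp]; simp
    rw [Polynomial.eval_sub, Polynomial.eval_sub, hcomp, hpdef, evalPP, evalPP, hB, sub_self]
  have hpeq : p = p.comp (-Polynomial.X) := by
    have := sub_eq_zero.mp hq
    exact this
  have hodd : ∀ m : ℕ, p.coeff (2*m+1) = 0 := by
    intro m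
    have h1 : p.coeff (2*m+1) = (-1:Polynomial ℝ)^(2*m+1) * p.coeff (2*m+1) := by
      conv_lhs => rw [hpeq, coeff_comp_neg]
    have h2 : ((-1:Polynomial ℝ))^(2*m+1) = -1 := by
      rw [pow_succ, pow_mul]; norm_num
    rw [h2] at h1
    have : 2 * p.coeff (2*m+1) = 0 := by linear_combination h1
    have h3 : (2 : Polynomial ℝ) ≠ 0 := by norm_num
    exact (mul_eq_zero.mp this).resolve_left h3
  refine ⟨p.natDegree, fun k => p.coeff (2*k), ?_⟩
  intro M1 M2 M3 M4
  have hs0 : (0:ℝ) ≤ M1^2+M2^2+M3^2 := by positivity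
  set ρ := Real.sqrt (M1^2+M2^2+M3^2) with hρdef
  have hρsq : ρ^2 = M1^2+M2^2+M3^2 := Real.sq_sqrt hs0
  rw [hA M1 M2 M3 M4, ← evalPP S ρ M4, ← hpdef]
  rw [Polynomial.eval_eq_sum_range (Polynomial.C ρ) (p := p), Polynomial.eval_finset_sum]
  have hterm : ∀ n : ℕ, Polynomial.eval M4 (p.coeff n * Polynomial.C ρ ^ n)
      = (p.coeff n).eval M4 * ρ^n := by
    intro n; simp
  calc ∑ n ∈ range (p.natDegree + 1), Polynomial.eval M4 (p.coeff n * Polynomial.C ρ ^ n)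
      = ∑ n ∈ range (p.natDegree + 1), (p.coeff n).eval M4 * ρ^n :=
        Finset.sum_congr rfl (fun n _ => hterm n)
    _ = ∑ n ∈ range (2*(p.natDegree + 1)), (p.coeff n).eval M4 * ρ^n := by
        apply Finset.sum_subset
        · intro n hn
          rw [Finset.mem_range] at hn ⊢
          omega
        · intro n _ hn
          rw [Finset.mem_range, not_lt] at hn
          rw [Polynomial.coeff_eq_zero_of_natDegree_lt (by omega)]
          simp
    _ = ∑ k ∈ range (p.natDegree + 1), (p.coeff (2*k)).eval M4 * ρ^(2*k) := by
        apply sum_even (fun n => (p.coeff n).eval M4 * ρ^n)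
        intro m
        rw [hodd m]
        simp
    _ = ∑ k ∈ range (p.natDegree + 1), (M1^2+M2^2+M3^2)^k * (p.coeff (2*k)).eval M4 := by
        apply Finset.sum_congr rfl
        intro k _
        rw [pow_mul, hρsq]
        ring
end

section
/- With H_BV = ℂ⁸, J_BV, R, S, T, D₁ = [[0,R],[R†,S]] and D₂ = [[T,0],[0,0]] as in the context, the data satisfy the conditions of a real spectral triple of KO-dimension 1 for D₁: (a) D₁ is Hermitian (D₁† = D₁); (b) J_BV is a conjugate-linear isometry, i.e. ⟨J_BV φ, J_BV ψ⟩ = ⟨ψ, φ⟩ for all φ, ψ ∈ ℂ⁸; (c) J_BV ∘ J_BV = id (so ε = 1); and (d) J_BV ∘ D₁ = −D₁ ∘ J_BV (so ε′ = −1). -/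
open Matrix

/-- The 4×4 matrix `R` (equal in form to `S`, with parameters `x1, x2, x3`). -/
noncomputable def Rmat (x1 x2 x3 : ℝ) : Matrix (Fin 4) (Fin 4) ℂ :=
  !![0, Complex.I * x3, -(Complex.I * x2), 0;
     -(Complex.I * x3), 0, Complex.I * x1, 0;
     Complex.I * x2, -(Complex.I * x1), 0, 0;
     0, 0, 0, 0]

/-- The 4×4 matrix `T` with parameters `C1*, C2*, C3*`. -/
noncomputable def Tmat (C1 C2 C3 : ℝ) : Matrix (Fin 4) (Fin 4) ℂ :=
  !![0, 0, 0, (C1 : ℂ);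
     0, 0, 0, (C2 : ℂ);
     0, 0, 0, (C3 : ℂ);
     (C1 : ℂ), (C2 : ℂ), (C3 : ℂ), 0]

/-- `D₁ = [[0, R], [R†, S]]` on `ℂ⁸ = ℂ⁴ ⊕ ℂ⁴`. -/
noncomputable def D1mat (M1 M2 M3 C1 C2 C3 : ℝ) :
    Matrix (Fin 4 ⊕ Fin 4) (Fin 4 ⊕ Fin 4) ℂ :=
  Matrix.fromBlocks 0 (Rmat M1 M2 M3) (Rmat M1 M2 M3)ᴴ (Rmat C1 C2 C3)

/-- `D₂ = [[T, 0], [0, 0]]` on `ℂ⁸ = ℂ⁴ ⊕ ℂ⁴`. -/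
noncomputable def D2mat (C1 C2 C3 : ℝ) :
    Matrix (Fin 4 ⊕ Fin 4) (Fin 4 ⊕ Fin 4) ℂ :=
  Matrix.fromBlocks (Tmat C1 C2 C3) 0 0 0

/-- The conjugate-linear map `J_BV`, `(J_BV φ)_a = i · conj(φ_a)`. -/
def JBV (φ : Fin 4 ⊕ Fin 4 → ℂ) : Fin 4 ⊕ Fin 4 → ℂ :=
  fun a => Complex.I * (starRingEnd ℂ) (φ a)

/-- The standard Hermitian inner product on `ℂ⁸`, conjugate-linear in the first argument. -/
noncomputable def innerBV (φ ψ : Fin 4 ⊕ Fin 4 → ℂ) : ℂ :=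
  ∑ a, (starRingEnd ℂ) (φ a) * ψ a

lemma Rmat_herm (x1 x2 x3 : ℝ) : (Rmat x1 x2 x3)ᴴ = Rmat x1 x2 x3 := by
  ext i j
  fin_cases i <;> fin_cases j <;>
    norm_num [Rmat, Matrix.conjTranspose_apply, Complex.ext_iff,
      Matrix.vecHead, Matrix.vecTail]

lemma Rmat_conj (x1 x2 x3 : ℝ) (a b : Fin 4) :
    (starRingEnd ℂ) (Rmat x1 x2 x3 a b) = -(Rmat x1 x2 x3 a b) := by
  fin_cases a <;> fin_cases b <;>
    norm_num [Rmat, Complex.ext_iff, Matrix.vecHead, Matrix.vecTail]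

lemma D1_conj (M1 M2 M3 C1 C2 C3 : ℝ) (a b : Fin 4 ⊕ Fin 4) :
    (starRingEnd ℂ) (D1mat M1 M2 M3 C1 C2 C3 a b) = -(D1mat M1 M2 M3 C1 C2 C3 a b) := by
  rcases a with a | a <;> rcases b with b | b
  · simp [D1mat]
  · simpa [D1mat] using Rmat_conj M1 M2 M3 a b
  · simp [D1mat, Matrix.conjTranspose_apply, Rmat_conj M1 M2 M3 b a]
  · simpa [D1mat] using Rmat_conj C1 C2 C3 a b

/-- `(A_BV, H_BV, D₁, J_BV)` satisfies the conditions of a real spectral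
triple of KO-dimension 1: `D₁` is Hermitian, `J_BV` is a conjugate-linear isometry,
`J_BV² = id` (ε = 1) and `J_BV D₁ = −D₁ J_BV` (ε′ = −1). -/
theorem BV_triple_D1_KO_dim_one (M1 M2 M3 C1 C2 C3 : ℝ) :
    (D1mat M1 M2 M3 C1 C2 C3)ᴴ = D1mat M1 M2 M3 C1 C2 C3 ∧
    (∀ φ ψ : Fin 4 ⊕ Fin 4 → ℂ, innerBV (JBV φ) (JBV ψ) = innerBV ψ φ) ∧
    (∀ φ : Fin 4 ⊕ Fin 4 → ℂ, JBV (JBV φ) = φ) ∧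
    (∀ φ : Fin 4 ⊕ Fin 4 → ℂ,
      JBV (D1mat M1 M2 M3 C1 C2 C3 *ᵥ φ) = -(D1mat M1 M2 M3 C1 C2 C3 *ᵥ JBV φ)) := by
  refine ⟨?_, ?_, ?_, ?_⟩
  · rw [D1mat, Matrix.fromBlocks_conjTranspose, Matrix.conjTranspose_zero,
      Matrix.conjTranspose_conjTranspose, Rmat_herm, Rmat_herm]
  · intro φ ψ
    unfold innerBV JBV
    congr 1
    funext a
    simp only [RingHom.map_mul, Complex.conj_I, Complex.conj_conj]
    ring_nf
    simp [Complex.I_sq]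
  · intro φ
    funext a
    simp only [JBV, RingHom.map_mul, Complex.conj_I, Complex.conj_conj]
    rw [← mul_assoc, mul_neg, Complex.I_mul_I]
    ring
  · intro φ
    funext a
    simp only [JBV, Matrix.mulVec, dotProduct, Pi.neg_apply, map_sum,
      Finset.mul_sum, ← Finset.sum_neg_distrib]
    refine Finset.sum_congr rfl fun b _ => ?_
    rw [RingHom.map_mul, D1_conj]
    ring
end

section
/- With H_BV = ℂ⁸, J_BV, T and D₂ = [[T,0],[0,0]] as in the context, the data satisfy the conditions of a real spectral triple of KO-dimension 7 for D₂: (a) D₂ is Hermitian (D₂† = D₂); (b) J_BV is a conjugate-linear isometry, i.e. ⟨J_BV φ, J_BV ψ⟩ = ⟨ψ, φ⟩ for all φ, ψ ∈ ℂ⁸; (c) J_BV ∘ J_BV = id (so ε = 1); and (d) J_BV ∘ D₂ = D₂ ∘ J_BV (so ε′ = 1). -/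
open Matrix

/-- `(A_BV, H_BV, D₂, J_BV)` satisfies the conditions of a real spectral
triple of KO-dimension 7: `D₂` is Hermitian, `J_BV` is a conjugate-linear isometry,
`J_BV² = id` (ε = 1) and `J_BV D₂ = D₂ J_BV` (ε′ = 1). -/
theorem BV_triple_D2_KO_dim_seven (C1 C2 C3 : ℝ) :
    (D2mat C1 C2 C3)ᴴ = D2mat C1 C2 C3 ∧
    (∀ φ ψ : Fin 4 ⊕ Fin 4 → ℂ, innerBV (JBV φ) (JBV ψ) = innerBV ψ φ) ∧
    (∀ φ : Fin 4 ⊕ Fin 4 → ℂ, JBV (JBV φ) = φ) ∧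
    (∀ φ : Fin 4 ⊕ Fin 4 → ℂ,
      JBV (D2mat C1 C2 C3 *ᵥ φ) = D2mat C1 C2 C3 *ᵥ JBV φ) := by
  have hstar : ∀ a b, (starRingEnd ℂ) (D2mat C1 C2 C3 a b) = D2mat C1 C2 C3 a b := by
    rintro (a | a) (b | b) <;> fin_cases a <;> fin_cases b <;>
      simp [D2mat, Tmat, Matrix.fromBlocks]
  refine ⟨?_, ?_, ?_, ?_⟩
  · ext (i | i) (j | j) <;> fin_cases i <;> fin_cases j <;>
      simp [D2mat, Tmat, Matrix.conjTranspose_apply, Matrix.fromBlocks]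
  · intro φ ψ
    unfold innerBV JBV
    refine Finset.sum_congr rfl fun a _ => ?_
    simp [_root_.map_mul, Complex.conj_I, Complex.conj_conj]
    ring_nf
    simp [Complex.I_sq]
  · intro φ
    funext a
    simp only [JBV, _root_.map_mul, Complex.conj_I, Complex.conj_conj]
    rw [show Complex.I * (-Complex.I * φ a) = -(Complex.I * Complex.I) * φ a by ring,
      Complex.I_mul_I]
    ring
  · intro φ
    funext a
    simp only [JBV, Matrix.mulVec, dotProduct, map_sum, _root_.map_mul, Finset.mul_sum]
    refine Finset.sum_congr rfl fun b _ => ?_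
    rw [hstar]
    ring
end

section
/- Let H = M₂(ℂ) ⊕ M₂(ℂ) with the Hilbert–Schmidt inner product, let α, β ∈ M₂(ℂ) be traceless Hermitian matrices, let D(α,β)(x,y) = (αx + xα + [β,y], [β,x] + [α,y]) and J(x,y) = (i·x*, i·y*) as in the context. For a ∈ M₂(ℂ) let π(a) denote the operator π(a)(x,y) = (ax, ay) of diagonal left multiplication. Then for all a, b ∈ M₂(ℂ): (a) J ∘ π(b)† ∘ J⁻¹ is the operator of diagonal right multiplication by b, (x,y) ↦ (xb, yb); (b) the commutation rule [π(a), J π(b)† J⁻¹] = 0 holds; and (c) the first-order condition [[D(α,β), π(a)], J π(b)† J⁻¹] = 0 holds. -/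
open Matrix

/-- The Hilbert space `H = M₂(ℂ) ⊕ M₂(ℂ)` of the BV spectral triple. -/
abbrev HBV : Type := Matrix (Fin 2) (Fin 2) ℂ × Matrix (Fin 2) (Fin 2) ℂ

/-- The Hilbert–Schmidt inner product `⟨(x,y),(x′,y′)⟩ = tr(x(x′)*) + tr(y(y′)*)`. -/
noncomputable def innerHS (v w : HBV) : ℂ :=
  (v.1 * w.1ᴴ).trace + (v.2 * w.2ᴴ).trace

/-- The BV Dirac operator `D(α,β)(x,y) = (αx + xα + [β,y], [β,x] + [α,y])`. -/
noncomputable def DopBV (α β : Matrix (Fin 2) (Fin 2) ℂ) : HBV → HBV :=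
  fun v => (α * v.1 + v.1 * α + (β * v.2 - v.2 * β),
            (β * v.1 - v.1 * β) + (α * v.2 - v.2 * α))

/-- The real structure `J(x,y) = (i·x*, i·y*)`; it satisfies `J⁻¹ = J`. -/
noncomputable def JopBV : HBV → HBV :=
  fun v => (Complex.I • v.1ᴴ, Complex.I • v.2ᴴ)

/-- Diagonal left multiplication `π(a)(x,y) = (ax, ay)`. -/
noncomputable def piOp (a : Matrix (Fin 2) (Fin 2) ℂ) : HBV → HBV :=
  fun v => (a * v.1, a * v.2)

lemma trace_self_eq_zero {x : Matrix (Fin 2) (Fin 2) ℂ}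
    (h : ((x * xᴴ).trace).re = 0) : x = 0 := by
  have h2 : ∑ i : Fin 2, ∑ j : Fin 2, Complex.normSq (x i j) = 0 := by
    simp [Matrix.trace, Matrix.diag, Matrix.mul_apply, Complex.mul_conj] at h
    simpa [Complex.normSq] using h
  ext i j
  have := (Finset.sum_eq_zero_iff_of_nonneg
    (fun i _ => Finset.sum_nonneg fun j _ => Complex.normSq_nonneg _)).mp h2 i
    (Finset.mem_univ i)
  have := (Finset.sum_eq_zero_iff_of_nonneg
    (fun j _ => Complex.normSq_nonneg _)).mp this j (Finset.mem_univ j)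
  simpa using Complex.normSq_eq_zero.mp this

lemma trace_re_nonneg (x : Matrix (Fin 2) (Fin 2) ℂ) :
    0 ≤ ((x * xᴴ).trace).re := by
  have h : ((x * xᴴ).trace).re = ∑ i : Fin 2, ∑ j : Fin 2, Complex.normSq (x i j) := by
    simp [Matrix.trace, Matrix.diag, Matrix.mul_apply, Complex.mul_conj]
  rw [h]
  exact Finset.sum_nonneg fun i _ => Finset.sum_nonneg fun j _ => Complex.normSq_nonneg _

lemma innerHS_self_eq_zero {v : HBV} (h : innerHS v v = 0) : v.1 = 0 ∧ v.2 = 0 := by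
  have hre := congrArg Complex.re h
  simp only [innerHS, Complex.add_re, Complex.zero_re] at hre
  have h1 := trace_re_nonneg v.1
  have h2 := trace_re_nonneg v.2
  constructor
  · exact trace_self_eq_zero (by linarith)
  · exact trace_self_eq_zero (by linarith)

lemma padj_eq (b : Matrix (Fin 2) (Fin 2) ℂ) (padj : HBV → HBV)
    (hpadj : ∀ v w : HBV, innerHS (padj v) w = innerHS v (piOp b w)) (v : HBV) :
    padj v = (bᴴ * v.1, bᴴ * v.2) := by
  have hstep : ∀ u : HBV, innerHS (padj v) u = innerHS (bᴴ * v.1, bᴴ * v.2) u := by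
    intro u
    rw [hpadj]
    simp only [innerHS, piOp, Matrix.conjTranspose_mul]
    rw [← Matrix.mul_assoc, ← Matrix.mul_assoc,
      Matrix.trace_mul_cycle v.1 (u.1ᴴ) bᴴ, Matrix.trace_mul_cycle v.2 (u.2ᴴ) bᴴ]
  set d : HBV := ((padj v).1 - bᴴ * v.1, (padj v).2 - bᴴ * v.2) with hd
  have key : innerHS d d = 0 := by
    have : innerHS d d = innerHS (padj v) d - innerHS (bᴴ * v.1, bᴴ * v.2) d := by
      simp only [innerHS, hd, Matrix.sub_mul, Matrix.trace_sub]
      ring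
    rw [this, hstep d, sub_self]
  obtain ⟨e1, e2⟩ := innerHS_self_eq_zero key
  have : (padj v).1 = bᴴ * v.1 := by
    have := sub_eq_zero.mp e1; exact this
  have h2 : (padj v).2 = bᴴ * v.2 := by
    have := sub_eq_zero.mp e2; exact this
  exact Prod.ext this h2

/-- for traceless Hermitian `α, β` and `a, b ∈ M₂(ℂ)`, with `π(b)†` the
adjoint of `π(b)` with respect to the Hilbert–Schmidt inner product:
(a) `J π(b)† J⁻¹` is diagonal right multiplication by `b`;
(b) the commutation rule `[π(a), J π(b)† J⁻¹] = 0` holds;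
(c) the first-order condition `[[D(α,β), π(a)], J π(b)† J⁻¹] = 0` holds. -/
theorem BV_commutation_and_first_order
    (α β : Matrix (Fin 2) (Fin 2) ℂ)
    (hα : αᴴ = α) (hβ : βᴴ = β) (hαtr : α.trace = 0) (hβtr : β.trace = 0)
    (a b : Matrix (Fin 2) (Fin 2) ℂ)
    (padj : HBV → HBV)
    (hpadj : ∀ v w : HBV, innerHS (padj v) w = innerHS v (piOp b w)) :
    (∀ v : HBV, JopBV (padj (JopBV v)) = (v.1 * b, v.2 * b)) ∧
    (∀ v : HBV, piOp a (JopBV (padj (JopBV v)))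
        = JopBV (padj (JopBV (piOp a v)))) ∧
    (∀ v : HBV,
      DopBV α β (piOp a (JopBV (padj (JopBV v))))
        - piOp a (DopBV α β (JopBV (padj (JopBV v))))
        - JopBV (padj (JopBV (DopBV α β (piOp a v) - piOp a (DopBV α β v)))) = 0) := by
  have hp := padj_eq b padj hpadj
  have ha : ∀ v : HBV, JopBV (padj (JopBV v)) = (v.1 * b, v.2 * b) := by
    intro v
    simp only [JopBV, hp, Matrix.conjTranspose_smul, Matrix.conjTranspose_mul,
      Matrix.conjTranspose_conjTranspose]
    ext1 <;> simp [Matrix.mul_smul, smul_smul, Complex.ext_iff]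
  refine ⟨ha, ?_, ?_⟩
  · intro v
    rw [ha, ha]
    simp [piOp, Matrix.mul_assoc]
  · intro v
    rw [ha]
    have key : DopBV α β (piOp a v) - piOp a (DopBV α β v)
        = ((α * a - a * α) * v.1 + (β * a - a * β) * v.2,
           (β * a - a * β) * v.1 + (α * a - a * α) * v.2) := by
      simp only [DopBV, piOp, Prod.mk_sub_mk]
      ext1 <;> (simp only []; noncomm_ring)
    rw [key, ha]
    simp only [DopBV, piOp, Prod.mk_sub_mk]
    ext1 <;> (simp only [Prod.fst_zero, Prod.snd_zero]; noncomm_ring)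
end

section
/- Let H = M₂(ℂ) ⊕ M₂(ℂ) with the Hilbert–Schmidt inner product and D(α,β), J as in the context. For (a₁,a₂) ∈ M₂(ℂ) ⊕ M₂(ℂ) let ρ(a₁,a₂) denote the operator ρ(a₁,a₂)(x,y) = (a₁x, a₂y). Let 𝒮 be a unital subalgebra of M₂(ℂ) ⊕ M₂(ℂ) that contains the diagonal subalgebra {(a,a) : a ∈ M₂(ℂ)} and is such that for all s, t ∈ 𝒮 and ALL traceless Hermitian α, β ∈ M₂(ℂ), both the commutation rule [ρ(s), J ρ(t)† J⁻¹] = 0 and the first-order condition [[D(α,β), ρ(s)], J ρ(t)† J⁻¹] = 0 hold. Then 𝒮 = {(a,a) : a ∈ M₂(ℂ)}; that is, the diagonal copy of M₂(ℂ) is the maximal unital subalgebra satisfying the commutation rule and the first-order condition for the BV spectral triple. -/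
open Matrix

/-- Componentwise left multiplication `ρ(a₁,a₂)(x,y) = (a₁x, a₂y)`. -/
noncomputable def rhoOp (t : Matrix (Fin 2) (Fin 2) ℂ × Matrix (Fin 2) (Fin 2) ℂ) :
    HBV → HBV :=
  fun v => (t.1 * v.1, t.2 * v.2)

/-- the diagonal copy of `M₂(ℂ)` is the maximal unital subalgebra of
`M₂(ℂ) ⊕ M₂(ℂ)` satisfying the commutation rule and the first-order condition for the
BV spectral triple (for all traceless Hermitian `α, β`); here `ρ(t)†` is characterized
as the adjoint of `ρ(t)` with respect to the Hilbert–Schmidt inner product. -/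
theorem BV_maximal_subalgebra
    (𝒮 : Subalgebra ℂ (Matrix (Fin 2) (Fin 2) ℂ × Matrix (Fin 2) (Fin 2) ℂ))
    (hdiag : ∀ a : Matrix (Fin 2) (Fin 2) ℂ, (a, a) ∈ 𝒮)
    (hcond : ∀ s ∈ 𝒮, ∀ t ∈ 𝒮, ∀ tadj : HBV → HBV,
      (∀ v w : HBV, innerHS (tadj v) w = innerHS v (rhoOp t w)) →
      ∀ α β : Matrix (Fin 2) (Fin 2) ℂ,
        αᴴ = α → βᴴ = β → α.trace = 0 → β.trace = 0 →
        (∀ v : HBV, rhoOp s (JopBV (tadj (JopBV v)))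
            = JopBV (tadj (JopBV (rhoOp s v)))) ∧
        (∀ v : HBV,
          DopBV α β (rhoOp s (JopBV (tadj (JopBV v))))
            - rhoOp s (DopBV α β (JopBV (tadj (JopBV v))))
            - JopBV (tadj (JopBV (DopBV α β (rhoOp s v) - rhoOp s (DopBV α β v))))
              = 0)) :
    ∀ p : Matrix (Fin 2) (Fin 2) ℂ × Matrix (Fin 2) (Fin 2) ℂ,
      p ∈ 𝒮 ↔ p.1 = p.2 := by

  intro p
  constructor
  · intro hp
    -- Reduce to showing `d := p.1 - p.2` is zero.
    set d : Matrix (Fin 2) (Fin 2) ℂ := p.1 - p.2 with hd_def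
    have hd : ((d, 0) : Matrix (Fin 2) (Fin 2) ℂ × Matrix (Fin 2) (Fin 2) ℂ) ∈ 𝒮 := by
      have hmem := 𝒮.sub_mem hp (hdiag p.2)
      have hx : p - (p.2, p.2) = ((d, 0) : Matrix (Fin 2) (Fin 2) ℂ × Matrix (Fin 2) (Fin 2) ℂ) := by
        rw [Prod.ext_iff]
        constructor <;> simp [hd_def]
      rwa [hx] at hmem
    -- explicit adjoint of `rhoOp (d, 0)`
    have hadj : ∀ v w : HBV,
        innerHS ((fun v : HBV => (dᴴ * v.1, (0 : Matrix (Fin 2) (Fin 2) ℂ))) v) w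
          = innerHS v (rhoOp (d, 0) w) := by
      intro v w
      simp [innerHS, rhoOp, Matrix.conjTranspose_mul, ← Matrix.mul_assoc]
      rw [Matrix.mul_assoc, Matrix.trace_mul_comm]
    -- The first-order condition gives `d [β, y] d = 0` for all traceless Hermitian β.
    have key : ∀ (β y : Matrix (Fin 2) (Fin 2) ℂ), βᴴ = β → β.trace = 0 →
        d * (β * y - y * β) * d = 0 := by
      intro β y hβ htβ
      have H := (hcond (d, 0) hd (d, 0) hd (fun v : HBV => (dᴴ * v.1, 0)) hadj 0 β
        (by simp) hβ (by simp) htβ).2 (0, y)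
      have h := congrArg Prod.fst H
      simp [DopBV, rhoOp, JopBV, Matrix.conjTranspose_mul, Matrix.conjTranspose_smul,
        smul_smul, Complex.conj_I, Matrix.mul_smul, Matrix.smul_mul, mul_sub, sub_mul,
        Matrix.mul_assoc] at h
      rw [show d * (β * y - y * β) * d = d * (β * (y * d)) - d * (y * (β * d)) by
        noncomm_ring]
      exact h
    have hdz : d = 0 := by
      have h1 := key !![1,0;0,-1] !![0,1;0,0]
        (by ext i j; fin_cases i <;> fin_cases j <;> simp [conjTranspose_apply])
        (by simp [Matrix.trace_fin_two])
      have h2 := key !![1,0;0,-1] !![0,0;1,0]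
        (by ext i j; fin_cases i <;> fin_cases j <;> simp [conjTranspose_apply])
        (by simp [Matrix.trace_fin_two])
      have h3 := key !![0,1;1,0] !![0,1;0,0]
        (by ext i j; fin_cases i <;> fin_cases j <;> simp [conjTranspose_apply])
        (by simp [Matrix.trace_fin_two])
      have e10 := congrFun (congrFun h1 1) 0
      have f01 := congrFun (congrFun h2 0) 1
      have g00 := congrFun (congrFun h3 0) 0
      have g11 := congrFun (congrFun h3 1) 1
      simp [Matrix.mul_apply, Fin.sum_univ_two, Matrix.sub_apply] at e10 f01 g00 g11
      have hb : d 0 1 = 0 := by rcases f01 with (h | h) | h <;> first | exact h | norm_num at h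
      have ha : d 0 0 = 0 := by rw [e10, mul_zero] at g00; simpa [mul_self_eq_zero] using g00
      have hc : d 1 1 = 0 := by rw [hb, mul_zero] at g11; simpa [mul_self_eq_zero] using g11
      ext i j; fin_cases i <;> fin_cases j <;> simp [ha, hb, hc, e10]
    have := sub_eq_zero.mp (hd_def ▸ hdz)
    exact this
  · intro h
    have := hdiag p.1
    have hp : p = (p.1, p.1) := by rw [Prod.ext_iff]; exact ⟨rfl, h.symm⟩
    rwa [hp]
end
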